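/- arXiv:quant-ph/0509192 — 2 statements merged into one kernel-verified Lean document; each statement's English description precedes it below -/
import Mathlib

section
/- For n ≥ 2 and any three distinct vectors u, s, t ∈ {0,1,2}^n, the 3-cycle (u s t) is a product of 3-cycles of the form (x y z) where x, y, z are three distinct vectors such that the set of coordinate positions at which x, y, z are not all equal has size at most 2. -/
open Equiv

abbrev V (n : ℕ) := Fin n → ZMod 3

/-- Swap gate `E_{i,j}`: exchanges coordinates `i` and `j`. -/
def swapFun {n : ℕ} (i j : Fin n) (x : V n) : V n :=
  fun r => if r = i then x j else if r = j then x i else x r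

/-- Not gate `N_j`: adds 1 (mod 3) to coordinate `j`. -/
def notFun {n : ℕ} (j : Fin n) (x : V n) : V n :=
  Function.update x j (x j + 1)

/-- Toffoli gate `T`: adds 1 (mod 3) to coordinate 0 when all other coordinates are 1. -/
def toffoliFun {n : ℕ} (x : V n) : V n :=
  if ∀ r : Fin n, 0 < r.val → x r = 1 then
    (fun r => if r.val = 0 then x r + 1 else x r) else x

/-- Controlled-Not gate `C_{j,i}`: adds 1 (mod 3) to coordinate `j` when coordinate `i` is 1. -/
def cnotFun {n : ℕ} (j i : Fin n) (x : V n) : V n :=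
  if x i = 1 then Function.update x j (x j + 1) else x

/-- Multiply-Two gate `MT_i`: multiplies coordinate `i` by 2 (mod 3). -/
def mtFun {n : ℕ} (i : Fin n) (x : V n) : V n :=
  Function.update x i (2 * x i)

/-- The 3-cycle `(a b c)`: maps `a ↦ b`, `b ↦ c`, `c ↦ a`, fixes everything else. -/
def cycle3 {α : Type*} [DecidableEq α] (a b c : α) : Equiv.Perm α :=
  Equiv.swap a c * Equiv.swap a b

/-- The heterogeneous columns of a triple of vectors. -/
def hetCols {n : ℕ} (u s t : V n) : Finset (Fin n) :=
  Finset.univ.filter (fun r => ¬ (u r = s r ∧ s r = t r))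


variable {n : ℕ}

def Dif (x y : V n) : Finset (Fin n) := Finset.univ.filter fun j => x j ≠ y j

lemma mem_Dif {x y : V n} {j : Fin n} : j ∈ Dif x y ↔ x j ≠ y j := by simp [Dif]

lemma Dif_comm (x y : V n) : Dif x y = Dif y x := by
  ext j; simp only [mem_Dif]; exact ne_comm

lemma Dif_self (x : V n) : Dif x x = ∅ := by ext j; simp [mem_Dif]

lemma mem_hetCols {x y z : V n} {j : Fin n} :
    j ∈ hetCols x y z ↔ ¬ (x j = y j ∧ y j = z j) := by simp [hetCols]

lemma hetCols_eq (x y z : V n) : hetCols x y z = Dif x y ∪ Dif x z := by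
  ext j
  simp only [mem_hetCols, Finset.mem_union, mem_Dif]
  by_cases h1 : x j = y j <;> by_cases h2 : y j = z j <;> simp [h1, h2]

lemma hetCols_rot (x y z : V n) : hetCols x y z = hetCols y z x := by
  ext j
  simp only [mem_hetCols]
  by_cases h1 : x j = y j <;> by_cases h2 : y j = z j <;>
    by_cases h3 : z j = x j <;> simp_all

lemma Dif_nonempty {x y : V n} (h : x ≠ y) : (Dif x y).Nonempty := by
  obtain ⟨j, hj⟩ := Function.ne_iff.mp h
  exact ⟨j, mem_Dif.mpr hj⟩

lemma ne_of_mem_Dif {x y : V n} {j : Fin n} (h : j ∈ Dif x y) : x ≠ y :=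
  fun hxy => (mem_Dif.mp h) (by rw [hxy])

lemma Dif_update (x p : V n) (c : Fin n) (v : ZMod 3) :
    Dif x (Function.update p c v) =
      if v = x c then (Dif x p).erase c else insert c ((Dif x p).erase c) := by
  ext j
  by_cases hj : j = c
  · subst hj
    split_ifs with h <;> simp [mem_Dif, Function.update_self, h]
    exact fun hh => h hh.symm
  · rw [mem_Dif, Function.update_of_ne hj]
    split_ifs <;> simp [mem_Dif, hj]

lemma Dif_card_le (x y : V n) : (Dif x y).card ≤ n := by
  have := Finset.card_filter_le (Finset.univ : Finset (Fin n)) (fun j => x j ≠ y j)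
  simpa [Dif] using this

lemma cycle3_split {α : Type*} [DecidableEq α] (p q r w : α) :
    cycle3 p w r * cycle3 p q w = cycle3 p q r := by
  unfold cycle3
  rw [mul_assoc, ← mul_assoc (Equiv.swap p w), Equiv.swap_mul_self, one_mul]

lemma cycle3_rot {α : Type*} [DecidableEq α] {a b c : α}
    (hab : a ≠ b) (hbc : b ≠ c) (hac : a ≠ c) : cycle3 a b c = cycle3 b c a := by
  ext x
  simp only [cycle3, Equiv.Perm.mul_apply]
  rcases eq_or_ne x a with rfl | hxa
  · rw [Equiv.swap_apply_left, Equiv.swap_apply_of_ne_of_ne hab.symm hbc,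
      Equiv.swap_apply_of_ne_of_ne hab hac, Equiv.swap_apply_right]
  rcases eq_or_ne x b with rfl | hxb
  · rw [Equiv.swap_apply_right, Equiv.swap_apply_left, Equiv.swap_apply_left,
      Equiv.swap_apply_of_ne_of_ne hbc.symm hac.symm]
  rcases eq_or_ne x c with rfl | hxc
  · rw [Equiv.swap_apply_of_ne_of_ne hac.symm hbc.symm, Equiv.swap_apply_right,
      Equiv.swap_apply_right, Equiv.swap_apply_left]
  · rw [Equiv.swap_apply_of_ne_of_ne hxa hxb, Equiv.swap_apply_of_ne_of_ne hxa hxc,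
      Equiv.swap_apply_of_ne_of_ne hxb hxc, Equiv.swap_apply_of_ne_of_ne hxb hxa]

def mu {n : ℕ} (x y z : V n) : ℕ :=
  (3 * n + 1) * (hetCols x y z).card +
    ((Dif x y).card + (Dif y z).card + (Dif x z).card)

lemma mu_rot (x y z : V n) : mu x y z = mu y z x := by
  unfold mu
  rw [hetCols_rot x y z, Dif_comm z x, Dif_comm y x]
  ring

lemma mu_lt_of_het_lt {x y z a b c : V n}
    (h : (hetCols x y z).card < (hetCols a b c).card) : mu x y z < mu a b c := by
  unfold mu
  have h1 := Dif_card_le x y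
  have h2 := Dif_card_le y z
  have h3 := Dif_card_le x z
  have key : (3 * n + 1) * ((hetCols x y z).card + 1) ≤ (3 * n + 1) * (hetCols a b c).card :=
    Nat.mul_le_mul_left _ h
  nlinarith

lemma mu_lt_of_het_eq {x y z a b c : V n}
    (h : (hetCols x y z).card = (hetCols a b c).card)
    (h2 : (Dif x y).card + (Dif y z).card + (Dif x z).card <
      (Dif a b).card + (Dif b c).card + (Dif a c).card) : mu x y z < mu a b c := by
  unfold mu
  rw [h]
  exact Nat.add_lt_add_left h2 _

lemma Dif_update_left (x p : V n) (c : Fin n) (v : ZMod 3) :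
    Dif (Function.update p c v) x =
      if v = x c then (Dif x p).erase c else insert c ((Dif x p).erase c) := by
  rw [Dif_comm, Dif_update]

lemma sing_union {α : Type*} [DecidableEq α] (c : α) (s : Finset α) :
    {c} ∪ s = insert c s := (Finset.insert_eq c s).symm

lemma union_sing {α : Type*} [DecidableEq α] (s : Finset α) (c : α) :
    s ∪ {c} = insert c s := by rw [Finset.union_comm]; exact (Finset.insert_eq c s).symm
lemma core {n : ℕ} (p q r : V n) (hpq : p ≠ q) (hqr : q ≠ r) (hpr : p ≠ r)
    (hm : 3 ≤ (hetCols p q r).card)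
    (hcase : (Dif p q = hetCols p q r ∧ Dif p r = hetCols p q r) ∨
             (Dif p q ≠ hetCols p q r ∧ Dif p r ≠ hetCols p q r)) :
    ∃ w : V n, w ≠ p ∧ w ≠ q ∧ w ≠ r ∧ mu p w r < mu p q r ∧ mu p q w < mu p q r := by
  have hH : hetCols p q r = Dif p q ∪ Dif p r := hetCols_eq p q r
  have hsubq : Dif p q ⊆ hetCols p q r := hH ▸ Finset.subset_union_left
  have hsubr : Dif p r ⊆ hetCols p q r := hH ▸ Finset.subset_union_right
  rcases hcase with ⟨hq, hr⟩ | ⟨hq, hr⟩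
  · -- FULL case : both pair-difference sets are the whole het set
    by_cases hex : ∃ c ∈ hetCols p q r, q c = r c
    · obtain ⟨c, hcH, hqrc⟩ := hex
      have hc1 : c ∈ Dif p q := hq ▸ hcH
      have hc2 : c ∈ Dif p r := hr ▸ hcH
      refine ⟨Function.update p c (r c), ?_, ?_, ?_, ?_, ?_⟩
      · exact Function.ne_iff.mpr ⟨c, by
          rw [Function.update_self]; exact fun h => (mem_Dif.mp hc2) h.symm⟩
      · have : (((hetCols p q r)).erase c).Nonempty := by
          rw [← Finset.card_pos, Finset.card_erase_of_mem hcH]; omega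
        obtain ⟨j, hj⟩ := this
        rw [Finset.mem_erase] at hj
        exact Function.ne_iff.mpr ⟨j, by
          rw [Function.update_of_ne hj.1]
          exact mem_Dif.mp (hq ▸ hj.2)⟩
      · have : (((hetCols p q r)).erase c).Nonempty := by
          rw [← Finset.card_pos, Finset.card_erase_of_mem hcH]; omega
        obtain ⟨j, hj⟩ := this
        rw [Finset.mem_erase] at hj
        exact Function.ne_iff.mpr ⟨j, by
          rw [Function.update_of_ne hj.1]
          exact mem_Dif.mp (hr ▸ hj.2)⟩
      · -- mu p w r < mu p q r
        have hv : ¬ (r c = p c) := fun h => (mem_Dif.mp hc2) h.symm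
        have e0 : Dif p (Function.update p c (r c)) = {c} := by
          rw [Dif_update, if_neg hv, Dif_self]; simp
        have e1 : hetCols p (Function.update p c (r c)) r = hetCols p q r := by
          rw [hetCols_eq, e0, sing_union, Finset.insert_eq_self.mpr hc2, hr]
        have e2 : Dif (Function.update p c (r c)) r = (Dif p r).erase c := by
          rw [Dif_update_left, if_pos rfl, Dif_comm r p]
        apply mu_lt_of_het_eq (by rw [e1])
        rw [e0, e2, Finset.card_singleton, Finset.card_erase_of_mem hc2, hq, hr]
        have hd : 1 ≤ (Dif q r).card := Finset.card_pos.mpr (Dif_nonempty hqr)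
        omega
      · -- mu p q w < mu p q r
        have hv : ¬ (r c = p c) := fun h => (mem_Dif.mp hc2) h.symm
        have e0 : Dif p (Function.update p c (r c)) = {c} := by
          rw [Dif_update, if_neg hv, Dif_self]; simp
        have e1 : hetCols p q (Function.update p c (r c)) = hetCols p q r := by
          rw [hetCols_eq, e0, union_sing, Finset.insert_eq_self.mpr hc1, hq]
        have e2 : Dif q (Function.update p c (r c)) = (Dif p q).erase c := by
          rw [Dif_update, if_pos hqrc.symm, Dif_comm q p]
        apply mu_lt_of_het_eq (by rw [e1])
        rw [e0, e2, Finset.card_singleton, Finset.card_erase_of_mem hc1, hq, hr]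
        have hd : 1 ≤ (Dif q r).card := Finset.card_pos.mpr (Dif_nonempty hqr)
        omega
    · push_neg at hex
      have hcH : (hetCols p q r).Nonempty := Finset.card_pos.mp (by omega)
      obtain ⟨c, hcH⟩ := hcH
      have hc1 : c ∈ Dif p q := hq ▸ hcH
      have hc2 : c ∈ Dif p r := hr ▸ hcH
      have hdqr : 3 ≤ (Dif q r).card :=
        le_trans hm (Finset.card_le_card fun j hj => mem_Dif.mpr (hex j hj))
      refine ⟨Function.update p c (r c), ?_, ?_, ?_, ?_, ?_⟩
      · exact Function.ne_iff.mpr ⟨c, by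
          rw [Function.update_self]; exact fun h => (mem_Dif.mp hc2) h.symm⟩
      · exact Function.ne_iff.mpr ⟨c, by
          rw [Function.update_self]; exact fun h => (hex c hcH) h.symm⟩
      · have : (((hetCols p q r)).erase c).Nonempty := by
          rw [← Finset.card_pos, Finset.card_erase_of_mem hcH]; omega
        obtain ⟨j, hj⟩ := this
        rw [Finset.mem_erase] at hj
        exact Function.ne_iff.mpr ⟨j, by
          rw [Function.update_of_ne hj.1]
          exact mem_Dif.mp (hr ▸ hj.2)⟩
      · have hv : ¬ (r c = p c) := fun h => (mem_Dif.mp hc2) h.symm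
        have e0 : Dif p (Function.update p c (r c)) = {c} := by
          rw [Dif_update, if_neg hv, Dif_self]; simp
        have e1 : hetCols p (Function.update p c (r c)) r = hetCols p q r := by
          rw [hetCols_eq, e0, sing_union, Finset.insert_eq_self.mpr hc2, hr]
        have e2 : Dif (Function.update p c (r c)) r = (Dif p r).erase c := by
          rw [Dif_update_left, if_pos rfl, Dif_comm r p]
        apply mu_lt_of_het_eq (by rw [e1])
        rw [e0, e2, Finset.card_singleton, Finset.card_erase_of_mem hc2, hq, hr]
        omega
      · have hv : ¬ (r c = p c) := fun h => (mem_Dif.mp hc2) h.symm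
        have e0 : Dif p (Function.update p c (r c)) = {c} := by
          rw [Dif_update, if_neg hv, Dif_self]; simp
        have e1 : hetCols p q (Function.update p c (r c)) = hetCols p q r := by
          rw [hetCols_eq, e0, union_sing, Finset.insert_eq_self.mpr hc1, hq]
        have e2 : Dif q (Function.update p c (r c)) =
            insert c ((Dif p q).erase c) := by
          rw [Dif_update, if_neg (fun h => (hex c hcH) h.symm), Dif_comm q p]
        apply mu_lt_of_het_eq (by rw [e1])
        rw [e0, e2, Finset.card_singleton,
          Finset.card_insert_of_notMem (Finset.notMem_erase c _),
          Finset.card_erase_of_mem hc1, hq, hr]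
        omega
  · -- GOOD case : both pair-difference sets are proper subsets
    by_cases hint : ((Dif p q) ∩ (Dif p r)).Nonempty
    · obtain ⟨c, hc⟩ := hint
      rw [Finset.mem_inter] at hc
      obtain ⟨hc1, hc2⟩ := hc
      have hv : ¬ (q c = p c) := fun h => (mem_Dif.mp hc1) h.symm
      have e0 : Dif p (Function.update p c (q c)) = {c} := by
        rw [Dif_update, if_neg hv, Dif_self]; simp
      refine ⟨Function.update p c (q c), ?_, ?_, ?_, ?_, ?_⟩
      · exact Function.ne_iff.mpr ⟨c, by rw [Function.update_self]; exact hv⟩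
      · intro hw
        apply hr
        refine Finset.Subset.antisymm hsubr fun j hj => ?_
        rw [hH, Finset.mem_union] at hj
        rcases hj with hj | hj
        · have hjc : j = c := by
            by_contra hjc
            have h2 : Function.update p c (q c) j = p j := Function.update_of_ne hjc _ _
            rw [hw] at h2
            exact (mem_Dif.mp hj) h2.symm
          rwa [hjc]
        · exact hj
      · intro hw
        apply hq
        refine Finset.Subset.antisymm hsubq fun j hj => ?_
        rw [hH, Finset.mem_union] at hj
        rcases hj with hj | hj
        · exact hj
        · have hjc : j = c := by
            by_contra hjc
            have h2 : Function.update p c (q c) j = p j := Function.update_of_ne hjc _ _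
            rw [hw] at h2
            exact (mem_Dif.mp hj) h2.symm
          rwa [hjc]
      · apply mu_lt_of_het_lt
        have e1 : hetCols p (Function.update p c (q c)) r = Dif p r := by
          rw [hetCols_eq, e0, sing_union, Finset.insert_eq_self.mpr hc2]
        rw [e1]
        exact Finset.card_lt_card (hsubr.ssubset_of_ne hr)
      · apply mu_lt_of_het_lt
        have e1 : hetCols p q (Function.update p c (q c)) = Dif p q := by
          rw [hetCols_eq, e0, union_sing, Finset.insert_eq_self.mpr hc1]
        rw [e1]
        exact Finset.card_lt_card (hsubq.ssubset_of_ne hq)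
    · rw [Finset.not_nonempty_iff_eq_empty] at hint
      have hdisj : Disjoint (Dif p q) (Dif p r) :=
        Finset.disjoint_iff_inter_eq_empty.mpr hint
      have hcard : (Dif p q).card + (Dif p r).card = (hetCols p q r).card := by
        rw [hH]; exact (Finset.card_union_of_disjoint hdisj).symm
      have h1 : 1 ≤ (Dif p q).card := Finset.card_pos.mpr (Dif_nonempty hpq)
      have h2 : 1 ≤ (Dif p r).card := Finset.card_pos.mpr (Dif_nonempty hpr)
      by_cases hbig : 2 ≤ (Dif p r).card
      · obtain ⟨c, hc⟩ := Dif_nonempty hpr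
        have hcq : c ∉ Dif p q := Finset.disjoint_right.mp hdisj hc
        have hqc : p c = q c := by simpa [mem_Dif] using hcq
        have hv : ¬ (r c = p c) := fun h => (mem_Dif.mp hc) h.symm
        have e0 : Dif p (Function.update p c (r c)) = {c} := by
          rw [Dif_update, if_neg hv, Dif_self]; simp
        refine ⟨Function.update p c (r c), ?_, ?_, ?_, ?_, ?_⟩
        · exact Function.ne_iff.mpr ⟨c, by rw [Function.update_self]; exact hv⟩
        · exact Function.ne_iff.mpr ⟨c, by
            rw [Function.update_self]
            exact fun h => (mem_Dif.mp hc) (hqc.trans h.symm)⟩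
        · have : ((Dif p r).erase c).Nonempty := by
            rw [← Finset.card_pos, Finset.card_erase_of_mem hc]; omega
          obtain ⟨j, hj⟩ := this
          rw [Finset.mem_erase] at hj
          exact Function.ne_iff.mpr ⟨j, by
            rw [Function.update_of_ne hj.1]; exact mem_Dif.mp hj.2⟩
        · apply mu_lt_of_het_lt
          have e1 : hetCols p (Function.update p c (r c)) r = Dif p r := by
            rw [hetCols_eq, e0, sing_union, Finset.insert_eq_self.mpr hc]
          rw [e1]; omega
        · apply mu_lt_of_het_lt
          have e1 : hetCols p q (Function.update p c (r c)) = insert c (Dif p q) := by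
            rw [hetCols_eq, e0, union_sing]
          rw [e1, Finset.card_insert_of_notMem hcq]; omega
      · obtain ⟨c, hc⟩ := Dif_nonempty hpq
        have hcr : c ∉ Dif p r := Finset.disjoint_left.mp hdisj hc
        have hrc : p c = r c := by simpa [mem_Dif] using hcr
        have hv : ¬ (q c = p c) := fun h => (mem_Dif.mp hc) h.symm
        have e0 : Dif p (Function.update p c (q c)) = {c} := by
          rw [Dif_update, if_neg hv, Dif_self]; simp
        refine ⟨Function.update p c (q c), ?_, ?_, ?_, ?_, ?_⟩
        · exact Function.ne_iff.mpr ⟨c, by rw [Function.update_self]; exact hv⟩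
        · have : ((Dif p q).erase c).Nonempty := by
            rw [← Finset.card_pos, Finset.card_erase_of_mem hc]; omega
          obtain ⟨j, hj⟩ := this
          rw [Finset.mem_erase] at hj
          exact Function.ne_iff.mpr ⟨j, by
            rw [Function.update_of_ne hj.1]; exact mem_Dif.mp hj.2⟩
        · exact Function.ne_iff.mpr ⟨c, by
            rw [Function.update_self]
            exact fun h => (mem_Dif.mp hc) (hrc.trans h.symm)⟩
        · apply mu_lt_of_het_lt
          have e1 : hetCols p (Function.update p c (q c)) r = insert c (Dif p r) := by
            rw [hetCols_eq, e0, sing_union]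
          rw [e1, Finset.card_insert_of_notMem hcr]; omega
        · apply mu_lt_of_het_lt
          have e1 : hetCols p q (Function.update p c (q c)) = Dif p q := by
            rw [hetCols_eq, e0, union_sing, Finset.insert_eq_self.mpr hc]
          rw [e1]; omega

lemma exists_choice {n : ℕ} (u s t : V n) (hus : u ≠ s) (hst : s ≠ t) (hut : u ≠ t)
    (hm : 3 ≤ (hetCols u s t).card) :
    ∃ p q r w : V n, p ≠ q ∧ q ≠ r ∧ p ≠ r ∧ w ≠ p ∧ w ≠ q ∧ w ≠ r ∧
      cycle3 p q r = cycle3 u s t ∧ mu p w r < mu u s t ∧ mu p q w < mu u s t := by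
  have e1 : hetCols s t u = hetCols u s t := (hetCols_rot u s t).symm
  have e2 : hetCols t u s = hetCols u s t := hetCols_rot t u s
  have m1 : mu s t u = mu u s t := (mu_rot u s t).symm
  have m2 : mu t u s = mu u s t := mu_rot t u s
  have c1 : cycle3 s t u = cycle3 u s t := (cycle3_rot hus hst hut).symm
  have c2 : cycle3 t u s = cycle3 u s t := cycle3_rot hut.symm hus hst.symm
  by_cases h1 : Dif u s = hetCols u s t
  · by_cases h2 : Dif u t = hetCols u s t
    · -- pivot u, FULL
      obtain ⟨w, ha, hb, hc, hd, he⟩ := core u s t hus hst hut hm (Or.inl ⟨h1, h2⟩)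
      exact ⟨u, s, t, w, hus, hst, hut, ha, hb, hc, rfl, hd, he⟩
    · by_cases h3 : Dif s t = hetCols u s t
      · -- pivot s, FULL : Dif s t = H, Dif s u = H
        obtain ⟨w, ha, hb, hc, hd, he⟩ := core s t u hst hut.symm hus.symm (by rw [e1]; exact hm)
          (Or.inl ⟨h3.trans e1.symm, (Dif_comm s u).trans (h1.trans e1.symm)⟩)
        exact ⟨s, t, u, w, hst, hut.symm, hus.symm, ha, hb, hc, c1,
          by rw [← m1]; exact hd, by rw [← m1]; exact he⟩
      · -- pivot t, GOOD : Dif t u ≠ H, Dif t s ≠ H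
        obtain ⟨w, ha, hb, hc, hd, he⟩ := core t u s hut.symm hus hst.symm (by rw [e2]; exact hm)
          (Or.inr ⟨fun h => h2 ((Dif_comm u t).trans (h.trans e2)), fun h => h3 ((Dif_comm s t).trans (h.trans e2))⟩)
        exact ⟨t, u, s, w, hut.symm, hus, hst.symm, ha, hb, hc, c2,
          by rw [← m2]; exact hd, by rw [← m2]; exact he⟩
  · by_cases h2 : Dif u t = hetCols u s t
    · by_cases h3 : Dif s t = hetCols u s t
      · -- pivot t, FULL : Dif t u = H, Dif t s = H
        obtain ⟨w, ha, hb, hc, hd, he⟩ := core t u s hut.symm hus hst.symm (by rw [e2]; exact hm)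
          (Or.inl ⟨(Dif_comm t u).trans (h2.trans e2.symm), (Dif_comm t s).trans (h3.trans e2.symm)⟩)
        exact ⟨t, u, s, w, hut.symm, hus, hst.symm, ha, hb, hc, c2,
          by rw [← m2]; exact hd, by rw [← m2]; exact he⟩
      · -- pivot s, GOOD : Dif s t ≠ H, Dif s u ≠ H
        obtain ⟨w, ha, hb, hc, hd, he⟩ := core s t u hst hut.symm hus.symm (by rw [e1]; exact hm)
          (Or.inr ⟨fun h => h3 (h.trans e1), fun h => h1 ((Dif_comm u s).trans (h.trans e1))⟩)
        exact ⟨s, t, u, w, hst, hut.symm, hus.symm, ha, hb, hc, c1,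
          by rw [← m1]; exact hd, by rw [← m1]; exact he⟩
    · -- pivot u, GOOD
      obtain ⟨w, ha, hb, hc, hd, he⟩ := core u s t hus hst hut hm (Or.inr ⟨h1, h2⟩)
      exact ⟨u, s, t, w, hus, hst, hut, ha, hb, hc, rfl, hd, he⟩

lemma main_aux {n : ℕ} : ∀ N : ℕ, ∀ u s t : V n, mu u s t ≤ N → u ≠ s → s ≠ t → u ≠ t →
    ∃ L : List (Equiv.Perm (V n)),
      (∀ τ ∈ L, ∃ x y z : V n, x ≠ y ∧ y ≠ z ∧ x ≠ z ∧
        (hetCols x y z).card ≤ 2 ∧ τ = cycle3 x y z) ∧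
      L.prod = cycle3 u s t := by
  intro N
  induction N using Nat.strong_induction_on with
  | _ N IH =>
  intro u s t hN hus hst hut
  by_cases hm : (hetCols u s t).card ≤ 2
  · refine ⟨[cycle3 u s t], ?_, List.prod_singleton⟩
    intro τ hτ
    rw [List.mem_singleton] at hτ
    exact ⟨u, s, t, hus, hst, hut, hm, hτ⟩
  · push_neg at hm
    obtain ⟨p, q, r, w, hpq, hqr, hpr, hwp, hwq, hwr, hcyc, hm1, hm2⟩ :=
      exists_choice u s t hus hst hut (by omega)
    obtain ⟨L1, hL1, hP1⟩ := IH (mu p w r) (by omega) p w r le_rfl hwp.symm hwr hpr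
    obtain ⟨L2, hL2, hP2⟩ := IH (mu p q w) (by omega) p q w le_rfl hpq hwq.symm hwp.symm
    refine ⟨L1 ++ L2, ?_, ?_⟩
    · intro τ hτ
      rcases List.mem_append.mp hτ with h | h
      exacts [hL1 τ h, hL2 τ h]
    · rw [List.prod_append, hP1, hP2, cycle3_split, hcyc]


theorem three_cycle_eq_prod_low_het_three_cycles (n : ℕ) (hn : 2 ≤ n)
    (u s t : V n) (hus : u ≠ s) (hst : s ≠ t) (hut : u ≠ t) :
    ∃ L : List (Equiv.Perm (V n)),
      (∀ τ ∈ L, ∃ x y z : V n, x ≠ y ∧ y ≠ z ∧ x ≠ z ∧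
        (hetCols x y z).card ≤ 2 ∧ τ = cycle3 x y z) ∧
      L.prod = cycle3 u s t :=
  main_aux (mu u s t) u s t le_rfl hus hst hut
end

section
/- For n ≥ 2, every even permutation of {0,1,2}^n is a product of 3-cycles each of which moves only three vectors that pairwise differ in at most two coordinate positions overall (i.e., the triple has at most two heterogeneous columns). -/
open Equiv

namespace GrayAux

def dig (k i : ℕ) : ℕ := k / 3 ^ i % 3

lemma dig_lt (k i : ℕ) : dig k i < 3 := Nat.mod_lt _ (by norm_num)

lemma dig_eq_zero (k i : ℕ) (h : k < 3 ^ i) : dig k i = 0 := by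
  unfold dig; rw [Nat.div_eq_of_lt h]

lemma exists_dig_ne_two (k : ℕ) : ∃ t, dig k t ≠ 2 :=
  ⟨k, by rw [dig_eq_zero k k (Nat.lt_pow_self (by norm_num) : k < 3 ^ k)]; omega⟩

lemma dig_div3 (k i : ℕ) : dig (k/3) i = dig k (i+1) := by
  unfold dig
  rw [Nat.div_div_eq_div_mul, pow_succ']

lemma dvd_succ_of_digs_two : ∀ (t k : ℕ), (∀ j < t, dig k j = 2) → 3 ^ t ∣ (k + 1) := by
  intro t
  induction t with
  | zero => intro k _; simp
  | succ t ih =>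
    intro k hk
    have h0 : k % 3 = 2 := by
      have := hk 0 (by omega)
      unfold dig at this; simpa using this
    have h3 : 3 ^ t ∣ (k / 3 + 1) := by
      apply ih
      intro j hj
      rw [dig_div3]
      exact hk (j+1) (by omega)
    have : k + 1 = 3 * (k / 3 + 1) := by omega
    rw [this, pow_succ']
    exact Nat.mul_dvd_mul_left 3 h3

/-- The key structural fact: if digits below `t` are all 2 then `k+1 = 3^t * (k/3^t + 1)`. -/
lemma succ_eq (t k : ℕ) (H : ∀ j < t, dig k j = 2) :
    k + 1 = 3 ^ t * (k / 3 ^ t + 1) := by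
  obtain ⟨c, hc⟩ := dvd_succ_of_digs_two t k H
  have hp : 0 < 3 ^ t := pow_pos (by norm_num : (0:ℕ) < 3) t
  have hc0 : c ≠ 0 := by rintro rfl; simp at hc
  obtain ⟨c', rfl⟩ : ∃ c', c = c' + 1 := ⟨c - 1, by omega⟩
  rw [Nat.mul_add, Nat.mul_one] at hc
  have hk : k = (3 ^ t - 1) + 3 ^ t * c' := by omega
  have hdiv : k / 3 ^ t = c' := by
    rw [hk, Nat.add_mul_div_left _ _ hp, Nat.div_eq_of_lt (by omega)]
    omega
  rw [hdiv, Nat.mul_add, Nat.mul_one]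
  omega

lemma dig_succ_lt (t k j : ℕ) (H : ∀ j < t, dig k j = 2) (hj : j < t) :
    dig (k+1) j = 0 := by
  rw [succ_eq t k H]
  have : (3:ℕ) ^ t = 3 ^ j * (3 * 3 ^ (t - j - 1)) := by
    rw [← pow_succ']
    rw [← pow_add]
    congr 1
    omega
  unfold dig
  rw [this, mul_assoc, Nat.mul_div_cancel_left _ (pow_pos (by norm_num : (0:ℕ) < 3) j)]
  rw [mul_assoc, Nat.mul_mod_right]

lemma dig_succ_eq (t k : ℕ) (H : ∀ j < t, dig k j = 2) (ht : dig k t ≠ 2) :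
    dig (k+1) t = dig k t + 1 := by
  have h := succ_eq t k H
  have hq : dig k t = (k / 3 ^ t) % 3 := rfl
  have : dig (k+1) t = (k / 3 ^ t + 1) % 3 := by
    unfold dig
    rw [h, Nat.mul_div_cancel_left _ (pow_pos (by norm_num : (0:ℕ) < 3) t)]
  omega

lemma dig_succ_gt (t k j : ℕ) (H : ∀ j < t, dig k j = 2) (ht : dig k t ≠ 2) (hj : t < j) :
    dig (k+1) j = dig k j := by
  have h := succ_eq t k H
  set q := k / 3 ^ t with hq
  have hq3 : q % 3 ≤ 1 := by have : dig k t = q % 3 := rfl; omega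
  obtain ⟨s, hs⟩ : ∃ s, j = t + (s + 1) := ⟨j - t - 1, by omega⟩
  have e1 : dig (k+1) j = (q+1) / 3 ^ (s+1) % 3 := by
    unfold dig
    rw [h, hs, pow_add, Nat.mul_div_mul_left _ _ (pow_pos (by norm_num : (0:ℕ) < 3) t)]
  have e2 : dig k j = q / 3 ^ (s+1) % 3 := by
    unfold dig
    rw [hs, pow_add, ← Nat.div_div_eq_div_mul]
  have e3 : (q+1) / 3 ^ (s+1) = q / 3 ^ (s+1) := by
    rw [pow_succ', ← Nat.div_div_eq_div_mul, ← Nat.div_div_eq_div_mul]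
    congr 1
    omega
  rw [e1, e2, e3]

end GrayAux
namespace GrayAux

def par (n k i : ℕ) : ℕ := ∑ j ∈ Finset.Ico (i+1) n, dig k j

def gv (n k : ℕ) : V n := fun i =>
  if Even (par n k i.val) then ((dig k i.val : ℕ) : ZMod 3)
  else ((2 - dig k i.val : ℕ) : ZMod 3)

lemma gv_adj (n k : ℕ) (h : k + 1 < 3 ^ n) :
    ∃ t : Fin n, ∀ i : Fin n, i ≠ t → gv n k i = gv n (k+1) i := by
  set t0 := Nat.find (exists_dig_ne_two k) with ht0def
  have ht0 : dig k t0 ≠ 2 := Nat.find_spec (exists_dig_ne_two k)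
  have H : ∀ j < t0, dig k j = 2 := fun j hj => by
    have := Nat.find_min (exists_dig_ne_two k) hj
    omega
  have ht0n : t0 < n := by
    by_contra hc
    push_neg at hc
    have hdvd := dvd_succ_of_digs_two n k (fun j hj => H j (by omega))
    have := Nat.le_of_dvd (by omega) hdvd
    omega
  refine ⟨⟨t0, ht0n⟩, ?_⟩
  intro i hi
  have hiv : i.val ≠ t0 := fun hc => hi (Fin.ext hc)
  rcases Nat.lt_or_ge t0 i.val with hgt | hge
  · -- i.val > t0 : everything above t0 unchanged
    have hdig : ∀ j, t0 < j → dig (k+1) j = dig k j :=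
      fun j hj => dig_succ_gt t0 k j H ht0 hj
    have hpar : par n k i.val = par n (k+1) i.val := by
      apply Finset.sum_congr rfl
      intro j hj
      rw [Finset.mem_Ico] at hj
      exact (hdig j (by omega)).symm
    unfold gv
    rw [hpar, hdig i.val hgt]
  · -- i.val < t0 : parity flips and digit goes 2 ↦ 0
    have hlt : i.val < t0 := by omega
    have hd2 : dig k i.val = 2 := H _ hlt
    have hd0 : dig (k+1) i.val = 0 := dig_succ_lt t0 k i.val H hlt
    set P := ∑ j ∈ Finset.Ico (t0+1) n, dig k j with hP
    have hPeq : ∑ j ∈ Finset.Ico (t0+1) n, dig (k+1) j = P := by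
      apply Finset.sum_congr rfl
      intro j hj
      rw [Finset.mem_Ico] at hj
      exact dig_succ_gt t0 k j H ht0 (by omega)
    set D := dig k t0 with hD
    have split1 : par n k i.val = (∑ j ∈ Finset.Ico (i.val+1) t0, dig k j) + (D + P) := by
      unfold par
      rw [← Finset.sum_Ico_consecutive (fun j => dig k j) (by omega : i.val+1 ≤ t0) (by omega : t0 ≤ n)]
      rw [Finset.sum_eq_sum_Ico_succ_bot (by omega : t0 < n)]
    have split2 : par n (k+1) i.val = (∑ j ∈ Finset.Ico (i.val+1) t0, dig (k+1) j) + ((D+1) + P) := by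
      unfold par
      rw [← Finset.sum_Ico_consecutive (fun j => dig (k+1) j) (by omega : i.val+1 ≤ t0) (by omega : t0 ≤ n)]
      rw [Finset.sum_eq_sum_Ico_succ_bot (by omega : t0 < n)]
      rw [dig_succ_eq t0 k H ht0, hPeq]
    have c1 : ∀ j ∈ Finset.Ico (i.val+1) t0, dig k j = 2 := by
      intro j hj; rw [Finset.mem_Ico] at hj; exact H j hj.2
    have c2 : ∀ j ∈ Finset.Ico (i.val+1) t0, dig (k+1) j = 0 := by
      intro j hj; rw [Finset.mem_Ico] at hj; exact dig_succ_lt t0 k j H hj.2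
    rw [Finset.sum_congr rfl c1, Finset.sum_const, smul_eq_mul] at split1
    rw [Finset.sum_congr rfl c2, Finset.sum_const, smul_eq_mul, Nat.mul_zero, Nat.zero_add] at split2
    have par1 : Even (par n k i.val) ↔ Even (D + P) := by
      rw [split1, Nat.even_iff, Nat.even_iff]
      omega
    have par2 : Even (par n (k+1) i.val) ↔ ¬ Even (D + P) := by
      rw [split2, Nat.even_iff, Nat.even_iff]
      omega
    unfold gv
    rw [hd2, hd0]
    by_cases hE : Even (D + P)
    · rw [if_pos (par1.mpr hE), if_neg (fun hc => (par2.mp hc) hE)]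
    · rw [if_neg (fun hc => hE (par1.mp hc)), if_pos (par2.mpr hE)]

lemma dig_inj (n k l : ℕ) (hk : k < 3 ^ n) (hl : l < 3 ^ n) (h : gv n k = gv n l) :
    ∀ i, i < n → dig k i = dig l i := by
  have main : ∀ d i, i < n → n ≤ i + d → dig k i = dig l i := by
    intro d
    induction d with
    | zero => intro i h1 h2; omega
    | succ d ih =>
      intro i hi hnd
      have hj : ∀ j, i < j → dig k j = dig l j := by
        intro j hij
        by_cases hjn : j < n
        · exact ih j hjn (by omega)
        · rw [dig_eq_zero k j (lt_of_lt_of_le hk (Nat.pow_le_pow_right (by norm_num) (by omega))),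
            dig_eq_zero l j (lt_of_lt_of_le hl (Nat.pow_le_pow_right (by norm_num) (by omega)))]
      have hpar : par n k i = par n l i := by
        apply Finset.sum_congr rfl
        intro j hjm
        rw [Finset.mem_Ico] at hjm
        exact hj j (by omega)
      have hgi := congrFun h ⟨i, hi⟩
      unfold gv at hgi
      simp only at hgi
      rw [hpar] at hgi
      have hdk := dig_lt k i
      have hdl := dig_lt l i
      by_cases hE : Even (par n l i)
      · rw [if_pos hE, if_pos hE] at hgi
        have := congrArg ZMod.val hgi
        rwa [ZMod.val_natCast, ZMod.val_natCast, Nat.mod_eq_of_lt hdk, Nat.mod_eq_of_lt hdl] at this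
      · rw [if_neg hE, if_neg hE] at hgi
        have := congrArg ZMod.val hgi
        rw [ZMod.val_natCast, ZMod.val_natCast, Nat.mod_eq_of_lt (by omega), Nat.mod_eq_of_lt (by omega)] at this
        omega
  intro i hi
  exact main n i hi (by omega)

lemma eq_of_digs : ∀ n k l, k < 3 ^ n → l < 3 ^ n → (∀ i < n, dig k i = dig l i) → k = l := by
  intro n
  induction n with
  | zero => intro k l hk hl _; simp at hk hl; omega
  | succ n ih =>
    intro k l hk hl hd
    have h0 : k % 3 = l % 3 := by
      have := hd 0 (by omega)
      unfold dig at this; simpa using this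
    have hk3 : k / 3 < 3 ^ n := by
      rw [Nat.div_lt_iff_lt_mul (by norm_num)]
      calc k < 3 ^ (n+1) := hk
      _ = 3 ^ n * 3 := by rw [pow_succ]
    have hl3 : l / 3 < 3 ^ n := by
      rw [Nat.div_lt_iff_lt_mul (by norm_num)]
      calc l < 3 ^ (n+1) := hl
      _ = 3 ^ n * 3 := by rw [pow_succ]
    have := ih (k/3) (l/3) hk3 hl3 (fun i hi => by
      rw [dig_div3, dig_div3]; exact hd (i+1) (by omega))
    omega

lemma gv_inj (n a b : ℕ) (ha : a < 3 ^ n) (hb : b < 3 ^ n) (h : gv n a = gv n b) : a = b :=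
  eq_of_digs n a b ha hb (dig_inj n a b ha hb h)

lemma gv_surj (n : ℕ) (x : V n) : ∃ a, a < 3 ^ n ∧ gv n a = x := by
  have hcard : Fintype.card (Fin (3 ^ n)) = Fintype.card (V n) := by
    simp [V]
  have hinj : Function.Injective (fun k : Fin (3 ^ n) => gv n k.val) := by
    intro a b hab
    exact Fin.ext (gv_inj n a.val b.val a.isLt b.isLt hab)
  have hbij := (Fintype.bijective_iff_injective_and_card _).mpr ⟨hinj, hcard⟩
  obtain ⟨a, ha⟩ := hbij.2 x
  exact ⟨a.val, a.isLt, ha⟩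

end GrayAux

namespace GrayAux

variable (n : ℕ)

/-- Adjacent transposition along the Gray code. -/
def sw (i : ℕ) : Equiv.Perm (V n) := Equiv.swap (gv n i) (gv n (i+1))

/-- The allowed generating set. -/
def Sset : Set (Equiv.Perm (V n)) :=
  {τ | ∃ x y z : V n, x ≠ y ∧ y ≠ z ∧ x ≠ z ∧ (hetCols x y z).card ≤ 2 ∧ τ = cycle3 x y z}

def SWset : Set (Equiv.Perm (V n)) := {τ | ∃ i, i + 2 ≤ 3 ^ n ∧ τ = sw n i}

lemma hetCols_card_le {x y z : V n} (t1 t2 : Fin n)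
    (h1 : ∀ r, r ≠ t1 → x r = y r) (h2 : ∀ r, r ≠ t2 → x r = z r) :
    (hetCols x y z).card ≤ 2 := by
  have hsub : hetCols x y z ⊆ {t1, t2} := by
    intro r hr
    unfold hetCols at hr
    rw [Finset.mem_filter] at hr
    by_contra hmem
    simp only [Finset.mem_insert, Finset.mem_singleton] at hmem
    push_neg at hmem
    have e1 := h1 r hmem.1
    have e2 := h2 r hmem.2
    exact hr.2 ⟨e1, e1.symm.trans e2⟩
  calc (hetCols x y z).card ≤ ({t1, t2} : Finset (Fin n)).card := Finset.card_le_card hsub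
  _ ≤ 2 := (Finset.card_insert_le _ _).trans (by simp)

lemma gv_ne {a b : ℕ} (ha : a < 3 ^ n) (hb : b < 3 ^ n) (hab : a ≠ b) : gv n a ≠ gv n b :=
  fun hc => hab (gv_inj n a b ha hb hc)

lemma cyc_mem {i : ℕ} (h : i + 3 ≤ 3 ^ n) : sw n i * sw n (i+1) ∈ Sset n := by
  obtain ⟨t1, ht1⟩ := gv_adj n i (by omega)
  obtain ⟨t2, ht2⟩ := gv_adj n (i+1) (by omega)
  refine ⟨gv n (i+1), gv n (i+2), gv n i, gv_ne n (by omega) (by omega) (by omega),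
    gv_ne n (by omega) (by omega) (by omega), gv_ne n (by omega) (by omega) (by omega), ?_, ?_⟩
  · exact hetCols_card_le n t2 t1 (fun r hr => ht2 r hr) (fun r hr => (ht1 r hr).symm)
  · show sw n i * sw n (i+1) = Equiv.swap (gv n (i+1)) (gv n i) * Equiv.swap (gv n (i+1)) (gv n (i+2))
    unfold sw
    rw [Equiv.swap_comm (gv n (i+1)) (gv n i)]

lemma Sset_inv {τ : Equiv.Perm (V n)} (h : τ ∈ Sset n) : τ⁻¹ ∈ Sset n := by
  obtain ⟨x, y, z, hxy, hyz, hxz, hcard, rfl⟩ := h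
  refine ⟨x, z, y, hxz, fun hc => hyz hc.symm, hxy, ?_, ?_⟩
  · have : hetCols x z y = hetCols x y z := by
      unfold hetCols
      apply Finset.filter_congr
      intro r _
      constructor
      · intro hc ⟨a, b⟩; exact hc ⟨a.trans b, b.symm⟩
      · intro hc ⟨a, b⟩; exact hc ⟨a.trans b, b.symm⟩
    rw [this]; exact hcard
  · unfold cycle3
    rw [mul_inv_rev, Equiv.swap_inv, Equiv.swap_inv]

lemma sw_mul_self (i : ℕ) : sw n i * sw n i = 1 := Equiv.swap_mul_self _ _

def G : Subgroup (Equiv.Perm (V n)) := Subgroup.closure (Sset n)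
def K : Subgroup (Equiv.Perm (V n)) := Subgroup.closure (SWset n)

lemma pair_mem_aux : ∀ j i, i ≤ j → j + 2 ≤ 3 ^ n → sw n i * sw n j ∈ G n := by
  intro j
  induction j with
  | zero =>
    intro i hi _
    interval_cases i
    rw [sw_mul_self]
    exact one_mem _
  | succ j ih =>
    intro i hi hm
    rcases Nat.eq_or_lt_of_le hi with heq | hlt
    · rw [heq, sw_mul_self]
      exact one_mem _
    · have hij : i ≤ j := by omega
      have : sw n i * sw n (j+1) = (sw n i * sw n j) * (sw n j * sw n (j+1)) := by
        rw [mul_assoc, ← mul_assoc (sw n j), sw_mul_self, one_mul]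
      rw [this]
      exact mul_mem (ih i hij (by omega)) (Subgroup.subset_closure (cyc_mem n (by omega)))

lemma pair_mem {i j : ℕ} (hi : i + 2 ≤ 3 ^ n) (hj : j + 2 ≤ 3 ^ n) :
    sw n i * sw n j ∈ G n := by
  rcases Nat.le_total i j with h | h
  · exact pair_mem_aux n j i h hj
  · have : sw n i * sw n j = (sw n j * sw n i)⁻¹ := by
      rw [mul_inv_rev]
      unfold sw
      rw [Equiv.swap_inv, Equiv.swap_inv]
    rw [this]
    exact inv_mem (pair_mem_aux n i j h hi)

lemma swap_mem : ∀ b a : ℕ, a < b → b < 3 ^ n → Equiv.swap (gv n a) (gv n b) ∈ K n := by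
  intro b
  induction b using Nat.strong_induction_on with
  | _ b ih =>
    intro a hab hb
    obtain ⟨b', rfl⟩ : ∃ b', b = b' + 1 := ⟨b - 1, by omega⟩
    rcases Nat.eq_or_lt_of_le (Nat.lt_succ_iff.mp hab) with heq | hlt
    · subst heq
      exact Subgroup.subset_closure ⟨a, by omega, rfl⟩
    · have hswb' : sw n b' ∈ K n := Subgroup.subset_closure ⟨b', by omega, rfl⟩
      have hrec : Equiv.swap (gv n a) (gv n b') ∈ K n := ih b' (by omega) a hlt (by omega)
      have e1 : (sw n b') (gv n a) = gv n a :=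
        Equiv.swap_apply_of_ne_of_ne (gv_ne n (by omega) (by omega) (by omega))
          (gv_ne n (by omega) (by omega) (by omega))
      have e2 : (sw n b') (gv n b') = gv n (b'+1) := Equiv.swap_apply_left _ _
      have key : Equiv.swap (gv n a) (gv n (b'+1)) =
          sw n b' * Equiv.swap (gv n a) (gv n b') * (sw n b')⁻¹ := by
        rw [← Equiv.swap_apply_apply, e1, e2]
      rw [key]
      exact mul_mem (mul_mem hswb' hrec) (inv_mem hswb')

lemma K_top : K n = ⊤ := by
  rw [eq_top_iff, ← Equiv.Perm.closure_isSwap]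
  rw [Subgroup.closure_le]
  rintro τ ⟨x, y, hxy, rfl⟩
  obtain ⟨a, ha, rfl⟩ := gv_surj n x
  obtain ⟨b, hb, rfl⟩ := gv_surj n y
  rcases lt_trichotomy a b with h | h | h
  · exact swap_mem n b a h hb
  · exact absurd (congrArg (gv n) h) hxy
  · rw [Equiv.swap_comm]
    exact swap_mem n a b h ha

lemma pairing : ∀ l : List (Equiv.Perm (V n)),
    (∀ y ∈ l, ∃ i, i + 2 ≤ 3 ^ n ∧ y = sw n i) → Even l.length → l.prod ∈ G n
  | [] => fun _ _ => by simp
  | [y] => fun _ h => by simp at h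
  | a :: b :: t => fun hmem hlen => by
    obtain ⟨i, hi, rfl⟩ := hmem a (by simp)
    obtain ⟨j, hj, rfl⟩ := hmem b (by simp)
    have : (sw n i :: sw n j :: t).prod = (sw n i * sw n j) * t.prod := by
      simp [mul_assoc]
    rw [this]
    refine mul_mem (pair_mem n hi hj) (pairing t (fun y hy => hmem y (by simp [hy])) ?_)
    simp only [List.length_cons] at hlen
    rw [Nat.even_add_one, Nat.even_add_one] at hlen
    by_contra hc
    exact hlen (fun h => hc h) |>.elim
    -- fallback
  
lemma even_mem_G (σ : Equiv.Perm (V n)) (hσ : Equiv.Perm.sign σ = 1) : σ ∈ G n := by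
  have hK : σ ∈ K n := by rw [K_top]; trivial
  have hKm : σ ∈ (K n).toSubmonoid := hK
  rw [K, Subgroup.closure_toSubmonoid] at hKm
  obtain ⟨l, hl, hlp⟩ := Submonoid.exists_list_of_mem_closure hKm
  have hl' : ∀ y ∈ l, ∃ i, i + 2 ≤ 3 ^ n ∧ y = sw n i := by
    intro y hy
    rcases hl y hy with h | h
    · exact h
    · obtain ⟨i, hi, hyi⟩ := h
      refine ⟨i, hi, ?_⟩
      have : y⁻¹ = sw n i := hyi
      rw [← inv_inv y, this]
      unfold sw
      rw [Equiv.swap_inv]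
  have hsign : ∀ y ∈ l, Equiv.Perm.sign y = -1 := by
    intro y hy
    obtain ⟨i, hi, rfl⟩ := hl' y hy
    exact Equiv.Perm.sign_swap (gv_ne n (by omega) (by omega) (by omega))
  have heven : Even l.length := by
    have h1 : Equiv.Perm.sign l.prod = ((l.map (Equiv.Perm.sign)).prod) :=
      map_list_prod Equiv.Perm.sign l
    have h2 : (l.map (Equiv.Perm.sign)).prod = (-1 : ℤˣ) ^ l.length := by
      rw [List.prod_eq_pow_card (l.map Equiv.Perm.sign) (-1 : ℤˣ) (by
        intro x hx
        obtain ⟨y, hy, rfl⟩ := List.mem_map.mp hx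
        exact hsign y hy), List.length_map]
    rw [hlp, hσ] at h1
    rw [h2] at h1
    exact (neg_one_pow_eq_one_iff_even (by decide)).mp h1.symm
  rw [← hlp]
  exact pairing n l hl' heven

end GrayAux

theorem even_perm_eq_prod_low_het_three_cycles (n : ℕ) (hn : 2 ≤ n)
    (σ : Equiv.Perm (V n)) (hσ : Equiv.Perm.sign σ = 1) :
    ∃ L : List (Equiv.Perm (V n)),
      (∀ τ ∈ L, ∃ x y z : V n, x ≠ y ∧ y ≠ z ∧ x ≠ z ∧
        (hetCols x y z).card ≤ 2 ∧ τ = cycle3 x y z) ∧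
      L.prod = σ := by
  have hσG : σ ∈ GrayAux.G n := GrayAux.even_mem_G n σ hσ
  have hm : σ ∈ (GrayAux.G n).toSubmonoid := hσG
  rw [GrayAux.G, Subgroup.closure_toSubmonoid] at hm
  obtain ⟨L, hL, hLp⟩ := Submonoid.exists_list_of_mem_closure hm
  refine ⟨L, ?_, hLp⟩
  intro τ hτ
  rcases hL τ hτ with h | h
  · exact h
  · have h1 : τ⁻¹ ∈ GrayAux.Sset n := h
    have h2 := GrayAux.Sset_inv n h1
    rwa [inv_inv] at h2
end
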